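/- (Gaussian kernels satisfy the mixed-norm finiteness conditions.) Let d ≥ 1, let D ⊆ ℝ^d be a bounded measurable set with positive finite Lebesgue measure, let T ∈ (0,1], and let G : (0,T]×D×D → ℝ be measurable with |G(t,x,y)| ≤ C t^{−d/2} exp(−|x−y|²/(C' t)) for all t ∈ (0,T] and almost every x, y ∈ D, for some constants C, C' > 0. Let r, s ∈ (1,∞) with Hölder conjugates r', s', and assume d/s + 2/r < 2 and d/s < 2/r. Then both mixed norms are finite: ‖ ‖G(t−τ,x,y)‖_{L^{r'}_τ(0,t;L^{s'}_y)} ‖_{L^r_t(0,T;L^s_x)} < ∞ and ‖ ‖G(t,x,·)‖_{L^{s'}_y(D)} ‖_{L^r_t(0,T;L^s_x)} < ∞. -/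

import Mathlib

open MeasureTheory ENNReal Set Filter

noncomputable section

/-- Euclidean space `ℝ^d`. -/
abbrev Esp (d : ℕ) := EuclideanSpace ℝ (Fin d)

/-- `L^q` seminorm (with exponent `q ∈ [1,∞]` as an `ℝ≥0∞`) of an `ℝ≥0∞`-valued function. -/
def eLp {α : Type*} [MeasurableSpace α] (μ : Measure α) (q : ℝ≥0∞) (f : α → ℝ≥0∞) : ℝ≥0∞ :=
  if q = ⊤ then essSup f μ else (∫⁻ a, f a ^ q.toReal ∂μ) ^ (1 / q.toReal)

/-- The `L^q(D)` norm of `f : ℝ^d → ℝ`. -/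
def lqNorm {d : ℕ} (D : Set (Esp d)) (q : ℝ≥0∞) (f : Esp d → ℝ) : ℝ≥0∞ :=
  eLp (volume.restrict D) q fun x => (‖f x‖₊ : ℝ≥0∞)

/-- The mixed `L^r(0,T;L^s(D))` norm of `u : (0,T) × D → ℝ`. -/
def mixedNorm {d : ℕ} (D : Set (Esp d)) (T : ℝ) (r s : ℝ≥0∞) (u : ℝ → Esp d → ℝ) : ℝ≥0∞ :=
  eLp (volume.restrict (Ioo (0 : ℝ) T)) r fun t => lqNorm D s (u t)

/-- `1/r` as a real number, with the convention `1/∞ = 0`. -/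
def invE (r : ℝ≥0∞) : ℝ := (1 / r).toReal

/-- The Duhamel map `Φ_{u₀}` associated with kernel `G`, nonlinearity `F` and data `u₀`. -/
def duhamel {d : ℕ} (D : Set (Esp d)) (G : ℝ → Esp d → Esp d → ℝ) (F : ℝ → ℝ)
    (u₀ : Esp d → ℝ) (u : ℝ → Esp d → ℝ) : ℝ → Esp d → ℝ := fun t x =>
  (∫ y in D, G t x y * u₀ y) + ∫ τ in Ioo (0 : ℝ) t, ∫ y in D, G (t - τ) x y * F (u τ y)

/-- The restricted product measure on `(0,T) × D`. -/
def prodTD {d : ℕ} (D : Set (Esp d)) (T : ℝ) : Measure (ℝ × Esp d) :=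
  (volume.restrict (Ioo (0 : ℝ) T)).prod (volume.restrict D)

/-- The `L^∞((0,T) × D)` norm (essential supremum over the product measure). -/
def essSupNorm {d : ℕ} (D : Set (Esp d)) (T : ℝ) (u : ℝ → Esp d → ℝ) : ℝ≥0∞ :=
  essSup (fun q : ℝ × Esp d => (‖u q.1 q.2‖₊ : ℝ≥0∞)) (prodTD D T)

/-- Assumption 1: smoothing estimate for the kernel `G`. -/
def SmoothingEstimate {d : ℕ} (D : Set (Esp d)) (G : ℝ → Esp d → Esp d → ℝ)
    (C_L ν : ℝ) : Prop :=
  ∀ q₁ q₂ : ℝ≥0∞, 1 ≤ q₁ → q₁ ≤ q₂ → ∀ t ∈ Ioc (0 : ℝ) 1, ∀ g : Esp d → ℝ, Measurable g →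
    lqNorm D q₂ (fun x => ∫ y in D, G t x y * g y) ≤
      ENNReal.ofReal (C_L * t ^ (-(ν * (invE q₁ - invE q₂)))) * lqNorm D q₁ g

/-- Assumption 2 on the nonlinearity `F`. -/
def NonlinearityAssumption (F : ℝ → ℝ) (C_F p : ℝ) : Prop :=
  ContDiff ℝ 1 F ∧ F 0 = 0 ∧
    ∀ z₁ z₂ : ℝ, |F z₁ - F z₂| ≤ C_F * (max |z₁| |z₂|) ^ (p - 1) * |z₁ - z₂|

/-- Iterated mixed norm `‖‖K(t−τ,x,y)‖_{L^{r'}_τ(0,t;L^{s'}_y)}‖_{L^r_t(0,T;L^s_x)}`. -/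
def kernelNorm₁ {d : ℕ} (D : Set (Esp d)) (T : ℝ) (r s r' s' : ℝ≥0∞)
    (K : ℝ → Esp d → Esp d → ℝ) : ℝ≥0∞ :=
  eLp (volume.restrict (Ioo (0 : ℝ) T)) r fun t =>
    eLp (volume.restrict D) s fun x =>
      eLp (volume.restrict (Ioo (0 : ℝ) t)) r' fun τ =>
        eLp (volume.restrict D) s' fun y => (‖K (t - τ) x y‖₊ : ℝ≥0∞)

/-- Iterated mixed norm `‖‖K(t,x,·)‖_{L^{s'}_y(D)}‖_{L^r_t(0,T;L^s_x)}`. -/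
def kernelNorm₂ {d : ℕ} (D : Set (Esp d)) (T : ℝ) (r s s' : ℝ≥0∞)
    (K : ℝ → Esp d → Esp d → ℝ) : ℝ≥0∞ :=
  eLp (volume.restrict (Ioo (0 : ℝ) T)) r fun t =>
    eLp (volume.restrict D) s fun x =>
      eLp (volume.restrict D) s' fun y => (‖K t x y‖₊ : ℝ≥0∞)

/-!
By the Gaussian bound, for each time `t` and a.e. `x` the `L^{s'}_y(D)` norm of `G(t,x,·)` is at
most that of a Gaussian of variance `∼ t` on all of `ℝ^d`, which is `≲ t^{-d/2 + d/(2s')}`, i.e.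
`≲ t^{-d/(2s)}`. As `D` has finite measure, the same bound holds for the `L^s_x` norm. Now
`t ↦ t^{-d/(2s)}` lies in `L^r(0,T)` because `d/s < 2/r`, which gives the second norm, and in
`L^{r'}(0,T)` because `d/s < 2 - 2/r = 2/r'`. For the first norm, the reflection `τ ↦ t - τ` bounds
the `L^{r'}_τ(0,t)` norm of `(t-τ)^{-d/(2s)}` by its `L^{r'}(0,T)` norm; Tonelli turns "for every
time, for a.e. `x`" into "for a.e. `x`, for a.e. time", which is what the reflection argument needs.
-/

open Module

theorem eLp_eq_eLpNorm {α : Type*} [MeasurableSpace α] {μ : Measure α} {q : ℝ≥0∞} (hq : q ≠ 0)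
    (f : α → ℝ≥0∞) : eLp μ q f = eLpNorm f q μ := by
  by_cases hq_top : q = ⊤
  · simp [eLp, hq_top, eLpNormEssSup]
  · simp [eLp, hq_top, eLpNorm_eq_eLpNorm' hq hq_top, eLpNorm']

theorem Measurable.eLpNorm_prod_right {α β E : Type*} [MeasurableSpace α] [MeasurableSpace β]
    [NormedAddCommGroup E] [MeasurableSpace E] [BorelSpace E] {ν : Measure β} [SFinite ν]
    {f : α × β → E} (hf : Measurable f) {p : ℝ≥0∞} (hp : p ≠ ⊤) :
    Measurable fun x => eLpNorm (fun y => f (x, y)) p ν := by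
  rcases eq_or_ne p 0 with rfl | hp₀
  · simp
  simp_rw [eLpNorm_eq_lintegral_rpow_enorm_toReal hp₀ hp]
  exact (hf.enorm.pow_const _).lintegral_prod_right'.pow_const _

theorem measurePreserving_sub_left_restrict_Ioo (t : ℝ) :
    MeasurePreserving (fun τ : ℝ => t - τ) (volume.restrict (Ioo 0 t))
      (volume.restrict (Ioo 0 t)) := by
  have hpre : (fun τ : ℝ => t - τ) ⁻¹' Ioo 0 t = Ioo 0 t := by
    ext τ
    simp only [mem_preimage, mem_Ioo, sub_pos, sub_lt_self_iff]
    exact and_comm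
  simpa only [hpre] using
    (Measure.measurePreserving_sub_left volume t).restrict_preimage (s := Ioo 0 t) measurableSet_Ioo

theorem eLpNorm_comp_sub_le {φ ψ : ℝ → ℝ≥0∞} (hφ : Measurable φ) {t T : ℝ} (htT : t ≤ T)
    (hψφ : ∀ᵐ u ∂volume.restrict (Ioo 0 T), ψ u ≤ φ u) (p : ℝ≥0∞) :
    eLpNorm (fun τ => ψ (t - τ)) p (volume.restrict (Ioo 0 t)) ≤
      eLpNorm φ p (volume.restrict (Ioo 0 T)) := by
  have hrefl := measurePreserving_sub_left_restrict_Ioo t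
  have hsub : volume.restrict (Ioo 0 t) ≤ volume.restrict (Ioo 0 T) :=
    Measure.restrict_mono (Ioo_subset_Ioo_right htT) le_rfl
  calc eLpNorm (fun τ => ψ (t - τ)) p (volume.restrict (Ioo 0 t))
      ≤ eLpNorm (fun τ => φ (t - τ)) p (volume.restrict (Ioo 0 t)) :=
        eLpNorm_mono_enorm_ae (hrefl.quasiMeasurePreserving.ae (ae_mono hsub hψφ))
    _ = eLpNorm φ p (volume.restrict (Ioo 0 t)) :=
        eLpNorm_comp_measurePreserving hφ.aestronglyMeasurable hrefl
    _ ≤ eLpNorm φ p (volume.restrict (Ioo 0 T)) := eLpNorm_mono_measure _ hsub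

theorem memLp_rpow_neg_restrict_Ioo {T γ p : ℝ} (hT : 0 < T) (hp : 0 < p) (hγ : γ * p < 1) :
    MemLp (fun t : ℝ => t ^ (-γ)) (ENNReal.ofReal p) (volume.restrict (Ioo 0 T)) := by
  refine ⟨(measurable_id.pow_const _).aestronglyMeasurable, ?_⟩
  rw [eLpNorm_lt_top_iff_lintegral_rpow_enorm_lt_top (by simpa using hp) ofReal_ne_top,
    toReal_ofReal hp.le]
  have hint := (intervalIntegral.integrableOn_Ioo_rpow_iff hT).2 (show -1 < -γ * p by linarith)
  refine lt_of_eq_of_lt (setLIntegral_congr_fun measurableSet_Ioo fun t ht => ?_) hint.2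
  rw [Real.enorm_of_nonneg (Real.rpow_nonneg ht.1.le _), Real.enorm_of_nonneg
    (Real.rpow_nonneg ht.1.le _), ofReal_rpow_of_nonneg (Real.rpow_nonneg ht.1.le _) hp.le,
    ← Real.rpow_mul ht.1.le]

section Gaussian

variable {V : Type*} [NormedAddCommGroup V] [InnerProductSpace ℝ V] [FiniteDimensional ℝ V]
  [MeasurableSpace V] [BorelSpace V]

theorem lintegral_exp_neg_sq_norm_div {c : ℝ} (hc : 0 < c) :
    ∫⁻ v : V, ENNReal.ofReal (Real.exp (-‖v‖ ^ 2 / c)) =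
      ENNReal.ofReal ((Real.pi * c) ^ (finrank ℝ V / 2 : ℝ)) := by
  have h := GaussianFourier.integral_rexp_neg_mul_sq_norm (V := V) (inv_pos.2 hc)
  simp only [neg_mul, ← div_eq_inv_mul, div_inv_eq_mul, ← neg_div] at h
  have hint : Integrable fun v : V => Real.exp (-‖v‖ ^ 2 / c) :=
    Integrable.of_integral_ne_zero (by rw [h]; positivity)
  rw [← h, ofReal_integral_eq_lintegral_ofReal hint (ae_of_all _ fun v => (Real.exp_pos _).le)]

theorem eLpNorm_exp_neg_sq_norm_div {c σ : ℝ} (hc : 0 < c) (hσ : 0 < σ) :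
    eLpNorm (fun v : V => Real.exp (-‖v‖ ^ 2 / c)) (ENNReal.ofReal σ) volume =
      ENNReal.ofReal ((Real.pi * c / σ) ^ (finrank ℝ V / (2 * σ))) := by
  have hpow : ∀ v : V, ‖Real.exp (-‖v‖ ^ 2 / c)‖ₑ ^ σ =
      ENNReal.ofReal (Real.exp (-‖v‖ ^ 2 / (c / σ))) := fun v => by
    rw [Real.enorm_of_nonneg (Real.exp_pos _).le,
      ofReal_rpow_of_nonneg (Real.exp_pos _).le hσ.le, ← Real.exp_mul]
    congr 2
    field_simp
  rw [eLpNorm_eq_lintegral_rpow_enorm_toReal (by simpa using hσ) ofReal_ne_top,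
    toReal_ofReal hσ.le]
  simp_rw [hpow]
  rw [lintegral_exp_neg_sq_norm_div (div_pos hc hσ),
    ofReal_rpow_of_nonneg (by positivity) (by positivity), ← Real.rpow_mul (by positivity)]
  congr 2 <;> ring

theorem eLpNorm_le_of_abs_le_gaussian {D : Set V} {g : V → ℝ} {x : V} {a c σ : ℝ}
    (ha : 0 ≤ a) (hc : 0 < c) (hσ : 0 < σ)
    (hg : ∀ᵐ y ∂volume.restrict D, |g y| ≤ a * Real.exp (-dist x y ^ 2 / c)) :
    eLpNorm g (ENNReal.ofReal σ) (volume.restrict D) ≤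
      ENNReal.ofReal (a * (Real.pi * c / σ) ^ (finrank ℝ V / (2 * σ))) := by
  let gauss : V → ℝ := fun v => Real.exp (-‖v‖ ^ 2 / c)
  calc eLpNorm g (ENNReal.ofReal σ) (volume.restrict D)
      ≤ eLpNorm (fun y => a * gauss (x - y)) (ENNReal.ofReal σ) (volume.restrict D) :=
        eLpNorm_mono_ae_real (by simpa [gauss, dist_eq_norm] using hg)
    _ ≤ eLpNorm (fun y => a * gauss (x - y)) (ENNReal.ofReal σ) volume :=
        eLpNorm_mono_measure _ Measure.restrict_le_self
    _ = eLpNorm (a • gauss) (ENNReal.ofReal σ) volume :=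
        eLpNorm_comp_measurePreserving (g := a • gauss) (by fun_prop)
          (Measure.measurePreserving_sub_left volume x)
    _ = ‖a‖ₑ * eLpNorm gauss (ENNReal.ofReal σ) volume := eLpNorm_const_smul _ _ _ _
    _ = _ := by
        rw [eLpNorm_exp_neg_sq_norm_div hc hσ, Real.enorm_of_nonneg ha,
          ← ofReal_mul ha]

end Gaussian

theorem eLpNorm_le_of_abs_le_heatKernel {d : ℕ} {D : Set (Esp d)} {g : Esp d → ℝ} {x : Esp d}
    {C C' s s' t : ℝ} (hC : 0 ≤ C) (hC' : 0 < C') (hss' : s.HolderConjugate s') (ht : 0 < t)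
    (hg : ∀ᵐ y ∂volume.restrict D,
      |g y| ≤ C * t ^ (-(d : ℝ) / 2) * Real.exp (-dist x y ^ 2 / (C' * t))) :
    eLpNorm g (ENNReal.ofReal s') (volume.restrict D) ≤
      ENNReal.ofReal
        (C * (Real.pi * C' / s') ^ ((d : ℝ) / (2 * s')) * t ^ (-((d : ℝ) / (2 * s)))) := by
  have hexp : -(d : ℝ) / 2 + d / (2 * s') = -(d / (2 * s)) := by
    have h := hss'.one_sub_inv
    have := hss'.pos.ne'
    have := hss'.symm.pos.ne'
    field_simp at h ⊢
    linear_combination (-(d : ℝ)) * h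
  refine (eLpNorm_le_of_abs_le_gaussian (mul_nonneg hC (Real.rpow_nonneg ht.le _))
    (mul_pos hC' ht) hss'.symm.pos hg).trans_eq ?_
  rw [finrank_euclideanSpace_fin, show Real.pi * (C' * t) / s' = Real.pi * C' / s' * t by ring,
    Real.mul_rpow (by have := hss'.symm.pos; positivity) ht.le, ← hexp, Real.rpow_add ht]
  ring_nf

section KernelNorms

variable {d : ℕ} {D : Set (Esp d)} {T : ℝ} {K : ℝ → Esp d → Esp d → ℝ} {φ : ℝ → ℝ≥0∞}

theorem kernelNorm₁_eq {r s r' s' : ℝ≥0∞} (hr : r ≠ 0) (hs : s ≠ 0) (hr' : r' ≠ 0)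
    (hs' : s' ≠ 0) :
    kernelNorm₁ D T r s r' s' K =
      eLpNorm (fun t => eLpNorm (fun x => eLpNorm (fun τ =>
        eLpNorm (K (t - τ) x) s' (volume.restrict D)) r' (volume.restrict (Ioo 0 t)))
          s (volume.restrict D)) r (volume.restrict (Ioo 0 T)) := by
  simp only [kernelNorm₁, eLp_eq_eLpNorm hr, eLp_eq_eLpNorm hs, eLp_eq_eLpNorm hr',
    eLp_eq_eLpNorm hs', ← enorm_eq_nnnorm, eLpNorm_enorm]

theorem kernelNorm₂_eq {r s s' : ℝ≥0∞} (hr : r ≠ 0) (hs : s ≠ 0) (hs' : s' ≠ 0) :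
    kernelNorm₂ D T r s s' K =
      eLpNorm (fun t => eLpNorm (fun x => eLpNorm (K t x) s' (volume.restrict D))
        s (volume.restrict D)) r (volume.restrict (Ioo 0 T)) := by
  simp only [kernelNorm₂, eLp_eq_eLpNorm hr, eLp_eq_eLpNorm hs, eLp_eq_eLpNorm hs',
    ← enorm_eq_nnnorm, eLpNorm_enorm]

theorem kernelNorm₂_lt_top {r s s' : ℝ≥0∞} (hr : r ≠ 0) (hs : s ≠ 0) (hs' : s' ≠ 0)
    (hD : volume D ≠ ⊤) (hφ : MemLp φ r (volume.restrict (Ioo 0 T)))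
    (hK : ∀ t ∈ Ioo 0 T, ∀ᵐ x ∂volume.restrict D,
      eLpNorm (K t x) s' (volume.restrict D) ≤ φ t) :
    kernelNorm₂ D T r s s' K < ⊤ := by
  rw [kernelNorm₂_eq hr hs hs']
  have hslice : ∀ᵐ t ∂volume.restrict (Ioo 0 T),
      ‖eLpNorm (fun x => eLpNorm (K t x) s' (volume.restrict D)) s (volume.restrict D)‖ₑ ≤
        volume D ^ s.toReal⁻¹ * ‖φ t‖ₑ := by
    filter_upwards [ae_restrict_mem measurableSet_Ioo] with t ht
    simpa [mul_comm] using eLpNorm_le_of_ae_enorm_bound (p := s) (μ := volume.restrict D)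
      (f := fun x => eLpNorm (K t x) s' (volume.restrict D)) (by simpa using hK t ht)
  calc _ ≤ volume D ^ s.toReal⁻¹ * eLpNorm φ r (volume.restrict (Ioo 0 T)) :=
        eLpNorm_le_mul_eLpNorm_of_ae_le_mul'' r hφ.1 hslice
    _ < ⊤ := mul_lt_top (by finiteness) hφ.2

theorem kernelNorm₁_lt_top {r s r' s' : ℝ≥0∞} (hr : r ≠ 0) (hs : s ≠ 0) (hr' : r' ≠ 0)
    (hs' : s' ≠ 0) (hs'_top : s' ≠ ⊤) (hD : volume D ≠ ⊤)
    (hKm : Measurable fun q : ℝ × Esp d × Esp d => K q.1 q.2.1 q.2.2)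
    (hφm : Measurable φ) (hφ : eLpNorm φ r' (volume.restrict (Ioo 0 T)) < ⊤)
    (hK : ∀ t ∈ Ioo 0 T, ∀ᵐ x ∂volume.restrict D,
      eLpNorm (K t x) s' (volume.restrict D) ≤ φ t) :
    kernelNorm₁ D T r s r' s' K < ⊤ := by
  rw [kernelNorm₁_eq hr hs hr' hs']
  set M := eLpNorm φ r' (volume.restrict (Ioo 0 T))
  have hslice_meas : Measurable fun z : Esp d × ℝ => eLpNorm (K z.2 z.1) s' (volume.restrict D) :=
    Measurable.eLpNorm_prod_right (f := fun q : (Esp d × ℝ) × Esp d => K q.1.2 q.1.1 q.2)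
      (hKm.comp (f := fun q : (Esp d × ℝ) × Esp d => (q.1.2, q.1.1, q.2)) (by fun_prop)) hs'_top
  have hK_swap : ∀ᵐ x ∂volume.restrict D, ∀ᵐ u ∂volume.restrict (Ioo 0 T),
      eLpNorm (K u x) s' (volume.restrict D) ≤ φ u :=
    (Measure.ae_ae_comm (p := fun x u => eLpNorm (K u x) s' (volume.restrict D) ≤ φ u)
      (measurableSet_le hslice_meas (hφm.comp measurable_snd))).2
      (ae_restrict_of_forall_mem measurableSet_Ioo hK)
  have hτ : ∀ t ∈ Ioo 0 T, ∀ᵐ x ∂volume.restrict D,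
      eLpNorm (fun τ => eLpNorm (K (t - τ) x) s' (volume.restrict D)) r'
        (volume.restrict (Ioo 0 t)) ≤ M := fun t ht =>
    hK_swap.mono fun x hx => eLpNorm_comp_sub_le hφm ht.2.le hx r'
  have hx : ∀ᵐ t ∂volume.restrict (Ioo 0 T),
      ‖eLpNorm (fun x => eLpNorm (fun τ => eLpNorm (K (t - τ) x) s' (volume.restrict D)) r'
        (volume.restrict (Ioo 0 t))) s (volume.restrict D)‖ₑ ≤ M * volume D ^ s.toReal⁻¹ := by
    filter_upwards [ae_restrict_mem measurableSet_Ioo] with t ht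
    simpa using eLpNorm_le_of_ae_enorm_bound (p := s) (μ := volume.restrict D)
      (f := fun x => eLpNorm (fun τ => eLpNorm (K (t - τ) x) s' (volume.restrict D)) r'
        (volume.restrict (Ioo 0 t))) (by simpa using hτ t ht)
  calc _ ≤ (M * volume D ^ s.toReal⁻¹) * volume (Ioo 0 T) ^ r.toReal⁻¹ := by
        simpa using eLpNorm_le_of_ae_enorm_bound (p := r) hx
    _ < ⊤ := mul_lt_top (mul_lt_top hφ (by finiteness))
        (rpow_lt_top_of_nonneg (by positivity) measure_Ioo_lt_top.ne)

end KernelNorms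

theorem gaussian_kernel_mixed_norm_finite_general
    {d : ℕ} (D : Set (Esp d)) (hDfin : volume D ≠ ⊤)
    (T : ℝ) (hT : T ∈ Ioc (0 : ℝ) 1)
    (G : ℝ → Esp d → Esp d → ℝ)
    (hGm : Measurable fun q : ℝ × Esp d × Esp d => G q.1 q.2.1 q.2.2)
    (C C' : ℝ) (hC : 0 < C) (hC' : 0 < C')
    (hGauss : ∀ t ∈ Ioc (0 : ℝ) T, ∀ᵐ x ∂volume.restrict D, ∀ᵐ y ∂volume.restrict D,
      |G t x y| ≤ C * t ^ (-(d : ℝ) / 2) * Real.exp (-(dist x y) ^ 2 / (C' * t)))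
    (r s r' s' : ℝ) (hr : 1 < r) (hs : 1 < s)
    (hr' : 1 / r + 1 / r' = 1) (hs' : 1 / s + 1 / s' = 1)
    (h1 : (d : ℝ) / s + 2 / r < 2) (h2 : (d : ℝ) / s < 2 / r) :
    kernelNorm₁ D T (ENNReal.ofReal r) (ENNReal.ofReal s)
        (ENNReal.ofReal r') (ENNReal.ofReal s') G < ⊤ ∧
      kernelNorm₂ D T (ENNReal.ofReal r) (ENNReal.ofReal s) (ENNReal.ofReal s') G < ⊤ := by
  have hrr' : r.HolderConjugate r' :=
    Real.holderConjugate_iff.2 ⟨hr, by simpa only [one_div] using hr'⟩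
  have hss' : s.HolderConjugate s' :=
    Real.holderConjugate_iff.2 ⟨hs, by simpa only [one_div] using hs'⟩
  set γ : ℝ := d / (2 * s)
  have hγ : ∀ p > 0, (d : ℝ) / s < 2 / p → γ * p < 1 := fun p hp h => by
    rw [div_lt_div_iff₀ hss'.pos hp] at h
    rw [div_mul_eq_mul_div, div_lt_one (by linarith [hss'.pos])]
    linarith
  have hγr : γ * r < 1 := hγ r hrr'.pos h2
  have hγr' : γ * r' < 1 := hγ r' hrr'.symm.pos <| by
    rw [div_eq_mul_inv 2 r', ← hrr'.one_sub_inv]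
    linarith [div_eq_mul_inv (2 : ℝ) r]
  set φ : ℝ → ℝ≥0∞ := fun t => ‖C * (Real.pi * C' / s') ^ ((d : ℝ) / (2 * s')) * t ^ (-γ)‖ₑ
  have hφ : ∀ p > 0, γ * p < 1 → MemLp φ (ENNReal.ofReal p) (volume.restrict (Ioo 0 T)) :=
    fun p hp hγp => ((memLp_rpow_neg_restrict_Ioo hT.1 hp hγp).const_mul _).enorm
  have hslice : ∀ t ∈ Ioo 0 T, ∀ᵐ x ∂volume.restrict D,
      eLpNorm (G t x) (ENNReal.ofReal s') (volume.restrict D) ≤ φ t := fun t ht =>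
    (hGauss t (Ioo_subset_Ioc_self ht)).mono fun x hx =>
      (eLpNorm_le_of_abs_le_heatKernel hC.le hC' hss' ht.1 hx).trans (Real.ofReal_le_enorm _)
  exact ⟨kernelNorm₁_lt_top (ofReal_pos.2 hrr'.pos).ne' (ofReal_pos.2 hss'.pos).ne'
      (ofReal_pos.2 hrr'.symm.pos).ne' (ofReal_pos.2 hss'.symm.pos).ne' ofReal_ne_top hDfin hGm
      (by fun_prop) (hφ r' hrr'.symm.pos hγr').2 hslice,
    kernelNorm₂_lt_top (ofReal_pos.2 hrr'.pos).ne' (ofReal_pos.2 hss'.pos).ne'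
      (ofReal_pos.2 hss'.symm.pos).ne' hDfin (hφ r hrr'.pos hγr) hslice⟩

/-- Gaussian kernels satisfy the mixed-norm finiteness conditions. -/
theorem gaussian_kernel_mixed_norm_finite
    {d : ℕ} (hd : 1 ≤ d) (D : Set (Esp d)) (hDmeas : MeasurableSet D)
    (hDbdd : Bornology.IsBounded D) (hDpos : 0 < volume D) (hDfin : volume D ≠ ⊤)
    (T : ℝ) (hT : T ∈ Ioc (0 : ℝ) 1)
    (G : ℝ → Esp d → Esp d → ℝ)
    (hGm : Measurable fun q : ℝ × Esp d × Esp d => G q.1 q.2.1 q.2.2)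
    (C C' : ℝ) (hC : 0 < C) (hC' : 0 < C')
    (hGauss : ∀ t ∈ Ioc (0 : ℝ) T, ∀ᵐ x ∂volume.restrict D, ∀ᵐ y ∂volume.restrict D,
      |G t x y| ≤ C * t ^ (-(d : ℝ) / 2) * Real.exp (-(dist x y) ^ 2 / (C' * t)))
    (r s r' s' : ℝ) (hr : 1 < r) (hs : 1 < s)
    (hr' : 1 / r + 1 / r' = 1) (hs' : 1 / s + 1 / s' = 1)
    (h1 : (d : ℝ) / s + 2 / r < 2) (h2 : (d : ℝ) / s < 2 / r) :
    kernelNorm₁ D T (ENNReal.ofReal r) (ENNReal.ofReal s)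
        (ENNReal.ofReal r') (ENNReal.ofReal s') G < ⊤ ∧
      kernelNorm₂ D T (ENNReal.ofReal r) (ENNReal.ofReal s) (ENNReal.ofReal s') G < ⊤ :=
  gaussian_kernel_mixed_norm_finite_general D hDfin T hT G hGm C C' hC hC' hGauss r s r' s' hr hs
    hr' hs' h1 h2
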